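/- arXiv:1509.01958 — 3 statements merged into one kernel-verified Lean document; each statement's English description precedes it below -/
import Mathlib

section
/- For every j ≥ 2, every divisor α > 1 of the Fermat number N_j = 2^(2^j) + 1 is of the form α = l · 2^(j+2) + 1 for some positive integer l (equivalently, α ≡ 1 (mod 2^(j+2))). -/
/-!
Every prime factor `p` of `N_j` satisfies `p ≡ 1 [MOD 2^(j+2)]`: the class of `2` has order
`2^(j+1)` modulo `p`, so `8 ∣ p - 1`, hence `2` is a square mod `p` and its square roots have
order `2^(j+2)` (this is `Nat.fermat_primeFactors_one_lt`). Residues `≡ 1` are closed under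
products, so every divisor of `N_j` is `≡ 1 [MOD 2^(j+2)]` as well.
-/

/-- The `j`-th Fermat number `N_j = 2^(2^j) + 1`. -/
def fermatN (j : ℕ) : ℕ := 2 ^ 2 ^ j + 1

namespace Nat

theorem modEq_one_of_forall_prime_dvd {m n : ℕ} (hn : n ≠ 0)
    (h : ∀ p, p.Prime → p ∣ n → p ≡ 1 [MOD m]) : n ≡ 1 [MOD m] := by
  induction n using Nat.recOnMul with
  | zero => exact absurd rfl hn
  | one => rfl
  | prime p hp => exact h p hp dvd_rfl
  | mul a b iha ihb =>
    obtain ⟨ha, hb⟩ := Nat.mul_ne_zero_iff.mp hn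
    exact (iha ha fun p hp hpa => h p hp (hpa.mul_right b)).mul
      (ihb hb fun p hp hpb => h p hp (hpb.mul_left a))

theorem exists_eq_mul_add_one_of_modEq_one {m a : ℕ} (h : a ≡ 1 [MOD m]) (ha : 1 < a) :
    ∃ l, 0 < l ∧ a = l * m + 1 := by
  obtain ⟨l, hl⟩ := (Nat.modEq_iff_dvd' ha.le).mp h.symm
  refine ⟨l, Nat.pos_of_ne_zero ?_, ?_⟩
  · rintro rfl
    omega
  · rw [mul_comm, ← hl]
    omega

end Nat

/-- For every `j ≥ 2`, every divisor `α > 1` of the Fermat number `N_j = 2^(2^j) + 1`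
is of the form `α = l · 2^(j+2) + 1` for some positive integer `l`. -/
theorem fermat_divisor_form (j : ℕ) (hj : 2 ≤ j) (α : ℕ) (hα : α ∣ fermatN j)
    (hα1 : 1 < α) : ∃ l : ℕ, 0 < l ∧ α = l * 2 ^ (j + 2) + 1 := by
  have prime_factor_modEq : ∀ p, p.Prime → p ∣ α → p ≡ 1 [MOD 2 ^ (j + 2)] := by
    intro p hp hpα
    obtain ⟨k, rfl⟩ := Nat.fermat_primeFactors_one_lt j p hj hp (hpα.trans hα)
    exact (Nat.modEq_zero_iff_dvd.mpr (dvd_mul_left (2 ^ (j + 2)) k)).add_right 1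
  exact Nat.exists_eq_mul_add_one_of_modEq_one
    (Nat.modEq_one_of_forall_prime_dvd (by omega) prime_factor_modEq) hα1
end

section
/- For every i ≥ 1, the element c_i satisfies (c_i)^(N_i) = a_{i−1}. -/
/-- `conwayL c n` is the subfield `L_{n-1}` of the algebraic closure of `F_2`
generated over `F_2` by `c 0, …, c (n-1)`; in particular `conwayL c 0 = ⊥ = F_2`. -/
noncomputable def conwayL (c : ℕ → AlgebraicClosure (ZMod 2)) (n : ℕ) :
    IntermediateField (ZMod 2) (AlgebraicClosure (ZMod 2)) :=
  IntermediateField.adjoin (ZMod 2) (c '' Set.Iio n)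

open Polynomial IntermediateField Module

theorem Subfield.mem_of_pow_natCard_eq_self {K : Type*} [Field K] (L : Subfield K) [Finite L]
    {x : K} (hx : x ^ Nat.card L = x) : x ∈ L := by
  have := Fintype.ofFinite L
  rw [Nat.card_eq_fintype_card] at hx
  have hq : 1 < Fintype.card L := Fintype.one_lt_card
  have hroots := roots_map_of_injective_of_card_eq_natDegree L.subtype.injective
    (by rw [FiniteField.roots_X_pow_card_sub_X, FiniteField.X_pow_card_sub_X_natDegree_eq L hq]; rfl)
  have hmem : x ∈ ((X ^ Fintype.card L - X : L[X]).map L.subtype).roots := by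
    simp [mem_roots (FiniteField.X_pow_card_sub_X_ne_zero K hq), hx]
  rw [← hroots, Multiset.mem_map] at hmem
  obtain ⟨y, -, rfl⟩ := hmem
  exact y.2

theorem finrank_adjoin_eq_two_of_sq_add_self {K E : Type*} [Field K] [Field E] [Algebra K E]
    {x : E} {a : K} (hxa : x ^ 2 + x = algebraMap K E a) (hx : x ∉ (algebraMap K E).range) :
    finrank K K⟮x⟯ = 2 := by
  set p : K[X] := X ^ 2 + X - C a
  have hp : p.Monic := by unfold p; monicity!
  have hpdeg : p.natDegree = 2 := by unfold p; compute_degree!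
  have hpx : aeval x p = 0 := by simp [p, hxa]
  have hint : IsIntegral K x := ⟨p, hp, by rwa [aeval_def] at hpx⟩
  rw [adjoin.finrank hint]
  refine le_antisymm ?_ ((minpoly.two_le_natDegree_iff hint).2 hx)
  exact hpdeg ▸ natDegree_le_of_dvd (minpoly.dvd K x hpx) hp.ne_zero

theorem pow_pow_eq_self_of_pow_eq_self {M : Type*} [Monoid M] {x : M} {b : ℕ} (hx : x ^ b = x)
    (t : ℕ) : x ^ b ^ t = x := by
  induction t with
  | zero => simp
  | succ t ih => rw [pow_succ, pow_mul, ih, hx]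

namespace CharTwo

variable {R : Type*} [CommRing R] [CharP R 2]

theorem pow_two_pow_two_pow_eq_self_of_lt {x : R} {j k : ℕ} (hx : x ^ 2 ^ 2 ^ j = x + 1)
    (hjk : j < k) : x ^ 2 ^ 2 ^ k = x := by
  have hsq : x ^ 2 ^ 2 ^ (j + 1) = x := by
    rw [pow_succ, pow_mul, sq, pow_mul, hx, add_pow_char_pow, hx, one_pow, add_assoc,
      CharTwo.add_self_eq_zero, add_zero]
  obtain ⟨d, rfl⟩ := Nat.exists_eq_add_of_lt hjk
  rw [add_right_comm, pow_add, pow_mul]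
  exact pow_pow_eq_self_of_pow_eq_self hsq _

theorem eq_or_eq_add_one_of_sq_add_self_eq [IsDomain R] {x y : R}
    (h : y ^ 2 + y = x ^ 2 + x) : y = x ∨ y = x + 1 := by
  have hfac : (y + x) * (y + x + 1) = 0 := by
    linear_combination h + (x ^ 2 + x + x * y) * CharTwo.two_eq_zero (R := R)
  rcases mul_eq_zero.mp hfac with h | h
  · exact .inl (CharTwo.add_eq_zero.mp h)
  · exact .inr (by linear_combination h - (x + 1) * CharTwo.two_eq_zero (R := R))

theorem pow_two_pow_eq_or_eq_add_one [IsDomain R] {x a : R} {m : ℕ} (hx : x ^ 2 + x = a)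
    (ha : a ^ 2 ^ m = a) : x ^ 2 ^ m = x ∨ x ^ 2 ^ m = x + 1 := by
  refine eq_or_eq_add_one_of_sq_add_self_eq ?_
  rw [hx, ← ha, ← hx, add_pow_char_pow, ← pow_mul, ← pow_mul, mul_comm]

end CharTwo

section ConwayTower

variable (c : ℕ → AlgebraicClosure (ZMod 2))

theorem conwayL_zero : conwayL c 0 = ⊥ := by
  simp [conwayL]

theorem mem_conwayL {j n : ℕ} (hj : j < n) : c j ∈ conwayL c n :=
  subset_adjoin _ _ ⟨j, hj, rfl⟩

theorem conwayL_succ (n : ℕ) :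
    conwayL c (n + 1) = (conwayL c n)⟮c n⟯.restrictScalars (ZMod 2) := by
  rw [conwayL, conwayL, adjoin_adjoin_left, ← Set.image_singleton, ← Set.image_union,
    Set.union_singleton, Set.Iio_insert, Set.Iio_add_one_eq_Iic]

instance (n : ℕ) : FiniteDimensional (ZMod 2) (conwayL c n) :=
  have : Finite (c '' Set.Iio n) := (Set.finite_Iio n).image c |>.to_subtype
  finiteDimensional_adjoin fun x _ ↦ Algebra.IsIntegral.isIntegral x

instance (n : ℕ) : Finite (conwayL c n) :=
  Module.finite_of_finite (ZMod 2)

theorem conway_sq_add_self (hc0 : c 0 ^ 2 + c 0 + 1 = 0)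
    (hrec : ∀ i : ℕ, c (i + 1) ^ 2 + c (i + 1) + ∏ j ∈ Finset.range (i + 1), c j = 0) (n : ℕ) :
    c n ^ 2 + c n = ∏ j ∈ Finset.range n, c j := by
  cases n with
  | zero => simpa using CharTwo.add_eq_zero.mp hc0
  | succ n => exact CharTwo.add_eq_zero.mp (hrec n)

theorem conway_not_mem_conwayL (hc0 : c 0 ^ 2 + c 0 + 1 = 0)
    (hnot : ∀ i : ℕ, c (i + 1) ∉ conwayL c (i + 1)) (n : ℕ) : c n ∉ conwayL c n := by
  cases n with
  | zero =>
    rw [conwayL_zero, mem_bot]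
    rintro ⟨r, hr⟩
    rw [← hr, ← map_pow, ZMod.pow_card, CharTwo.add_self_eq_zero, zero_add] at hc0
    exact one_ne_zero hc0
  | succ n => exact hnot n

variable {c}

theorem prod_mem_conwayL (n : ℕ) : ∏ j ∈ Finset.range n, c j ∈ conwayL c n :=
  prod_mem fun _ hj ↦ mem_conwayL c (Finset.mem_range.mp hj)

theorem finrank_adjoin_conwayL {n : ℕ} (hsq : c n ^ 2 + c n = ∏ j ∈ Finset.range n, c j)
    (hnot : c n ∉ conwayL c n) : finrank (conwayL c n) (conwayL c n)⟮c n⟯ = 2 :=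
  finrank_adjoin_eq_two_of_sq_add_self (a := ⟨_, prod_mem_conwayL n⟩) hsq (by simpa using hnot)

theorem natCard_conwayL (hsq : ∀ n, c n ^ 2 + c n = ∏ j ∈ Finset.range n, c j)
    (hnot : ∀ n, c n ∉ conwayL c n) (n : ℕ) : Nat.card (conwayL c n) = 2 ^ 2 ^ n := by
  induction n with
  | zero => rw [conwayL_zero, Nat.card_congr (botEquiv _ _).toEquiv, Nat.card_zmod]; rfl
  | succ n ih =>
    have h2 := finrank_adjoin_conwayL (hsq n) (hnot n)
    have : Module.Finite (conwayL c n) (conwayL c n)⟮c n⟯ := Module.finite_of_finrank_eq_succ h2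
    calc Nat.card (conwayL c (n + 1)) = Nat.card (conwayL c n)⟮c n⟯ := by rw [conwayL_succ]; rfl
      _ = 2 ^ 2 ^ (n + 1) := by
        rw [Module.natCard_eq_pow_finrank (K := conwayL c n), ih, h2]; ring

theorem conway_pow_two_pow_two_pow (hsq : ∀ n, c n ^ 2 + c n = ∏ j ∈ Finset.range n, c j)
    (hnot : ∀ n, c n ∉ conwayL c n) (n : ℕ) : c n ^ 2 ^ 2 ^ n = c n + 1 := by
  induction n using Nat.strong_induction_on with
  | _ n ih =>
  have hprod : (∏ j ∈ Finset.range n, c j) ^ 2 ^ 2 ^ n = ∏ j ∈ Finset.range n, c j := by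
    rw [← Finset.prod_pow]
    exact Finset.prod_congr rfl fun j hj ↦
      CharTwo.pow_two_pow_two_pow_eq_self_of_lt (ih j (Finset.mem_range.mp hj)) (Finset.mem_range.mp hj)
  refine (CharTwo.pow_two_pow_eq_or_eq_add_one (hsq n) hprod).resolve_left fun hfix ↦ hnot n ?_
  have : Finite (conwayL c n).toSubfield := inferInstanceAs (Finite (conwayL c n))
  refine (conwayL c n).toSubfield.mem_of_pow_natCard_eq_self ?_
  rwa [← natCard_conwayL hsq hnot n] at hfix

end ConwayTower

theorem conway_pow_fermat_general (c : ℕ → AlgebraicClosure (ZMod 2))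
    (hc0 : c 0 ^ 2 + c 0 + 1 = 0)
    (hrec : ∀ i : ℕ, c (i + 1) ^ 2 + c (i + 1) + ∏ j ∈ Finset.range (i + 1), c j = 0)
    (hnot : ∀ i : ℕ, c (i + 1) ∉ conwayL c (i + 1))
    (i : ℕ) :
    c i ^ fermatN i = ∏ j ∈ Finset.range i, c j := by
  have hsq := conway_sq_add_self c hc0 hrec
  rw [fermatN, pow_succ,
    conway_pow_two_pow_two_pow hsq (conway_not_mem_conwayL c hc0 hnot) i, ← hsq i]
  ring

/-- For every `i ≥ 1`, the element `c_i` of Conway's tower satisfies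
`(c_i)^(N_i) = a_{i−1} = ∏_{j=0}^{i-1} c_j`. -/
theorem conway_pow_fermat (c : ℕ → AlgebraicClosure (ZMod 2))
    (hc0 : c 0 ^ 2 + c 0 + 1 = 0)
    (hrec : ∀ i : ℕ, c (i + 1) ^ 2 + c (i + 1) + ∏ j ∈ Finset.range (i + 1), c j = 0)
    (hnot : ∀ i : ℕ, c (i + 1) ∉ conwayL c (i + 1))
    (i : ℕ) (hi : 1 ≤ i) :
    c i ^ fermatN i = ∏ j ∈ Finset.range i, c j :=
  conway_pow_fermat_general c hc0 hrec hnot i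
end

section
/- For every i ≥ 2, O(c_i · c_0) = N_0 · O(c_i) = 3 · O(c_i) and O(a_i · a_0) = N_0 · O(a_i) = 3 · O(a_i), where a_0 = c_0. -/
/-!
Write `q = 2 ^ 2 ^ (i + 1) = #L_i`, so that `∑_{t < 2 ^ (i + 1)} x ^ 2 ^ t` is the trace of
`x ∈ L_i` over `𝔽₂`. Iterating Frobenius on `c_{i+1}² = c_{i+1} + a_i` gives
`c_{i+1} ^ q = c_{i+1} + Tr(a_i)`, and an induction shows `a_i ∈ L_i` with `Tr(a_i) = 1`.
Hence `c_{i+1} ^ (q + 1) = a_i` and `a_{i+1} ^ (q + 1) = a_i ³`. With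
`e_i = (q - 1) / 3 = N_1 ⋯ N_i`, prime to `3` by Goldbach's theorem on Fermat numbers, this
gives `a_{i+1} ^ e_{i+1} = a_i ^ (q - 1) = 1` and `c_{i+2} ^ e_{i+2} = a_{i+1} ^ e_{i+1} = 1`.
So the orders of `c_i` (`i ≥ 2`) and `a_i` (`i ≥ 1`) are prime to `O(c_0) = 3`, and orders
of commuting elements of coprime orders multiply.
-/

open Finset

section CharTwo

variable {R : Type*} [CommRing R] [CharP R 2]

theorem pow_two_pow_eq_add_sum_of_sq_eq_add {x a : R} (h : x ^ 2 = x + a) (m : ℕ) :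
    x ^ 2 ^ m = x + ∑ t ∈ range m, a ^ 2 ^ t := by
  induction m with
  | zero => simp
  | succ m ih =>
    rw [pow_succ, pow_mul, ih, CharTwo.add_sq, CharTwo.sum_sq, h, sum_range_succ']
    simp only [← pow_mul, ← pow_succ, pow_zero, pow_one]
    ring

theorem pow_two_pow_add_self_eq_self {x a : R} {n : ℕ} (hx : x ^ 2 ^ n = x + a)
    (ha : a ^ 2 ^ n = a) : x ^ 2 ^ (n + n) = x := by
  rw [pow_add, pow_mul, hx, add_pow_char_pow, hx, ha, add_assoc, CharTwo.add_self_eq_zero,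
    add_zero]

theorem sum_range_add_self_pow_two_pow {x a : R} {n : ℕ} (hx : x ^ 2 ^ n = x + a) :
    ∑ t ∈ range (n + n), x ^ 2 ^ t = ∑ t ∈ range n, a ^ 2 ^ t := by
  simp only [sum_range_add, pow_add, pow_mul, hx, add_pow_char_pow, sum_add_distrib,
    CharTwo.add_cancel_left]

end CharTwo

theorem orderOf_mul_eq_mul_orderOf_of_pow_eq_one {G : Type*} [CommMonoid G] {x y : G} {n : ℕ}
    (hx : x ^ n = 1) (hn : n.Coprime (orderOf y)) : orderOf (x * y) = orderOf x * orderOf y :=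
  (Commute.all x y).orderOf_mul_eq_mul_orderOf_of_coprime
    (Nat.Coprime.coprime_dvd_left (orderOf_dvd_of_pow_eq_one hx) hn)

def cubeExponent (i : ℕ) : ℕ := ∏ j ∈ range i, Nat.fermatNumber (j + 1)

theorem cubeExponent_succ (i : ℕ) :
    cubeExponent (i + 1) = cubeExponent i * Nat.fermatNumber (i + 1) :=
  prod_range_succ _ _

theorem three_mul_cubeExponent_add_one (i : ℕ) : 3 * cubeExponent i + 1 = 2 ^ 2 ^ (i + 1) := by
  have h := Nat.prod_fermatNumber (i + 1)
  rw [prod_range_succ', Nat.fermatNumber_zero] at h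
  have h2 := Nat.two_lt_fermatNumber (i + 1)
  unfold cubeExponent Nat.fermatNumber at *
  omega

theorem coprime_three_cubeExponent (i : ℕ) : Nat.Coprime 3 (cubeExponent i) :=
  Nat.Coprime.prod_right fun j _ => Nat.coprime_fermatNumber_fermatNumber (Nat.succ_ne_zero j).symm

def conwayProd {M : Type*} [CommMonoid M] (c : ℕ → M) (k : ℕ) : M := ∏ j ∈ range (k + 1), c j

theorem conwayProd_succ {M : Type*} [CommMonoid M] (c : ℕ → M) (k : ℕ) :
    conwayProd c (k + 1) = conwayProd c k * c (k + 1) :=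
  prod_range_succ _ _

structure ConwayRelations {R : Type*} [CommRing R] (c : ℕ → R) : Prop where
  sq_add_self_zero : c 0 ^ 2 + c 0 + 1 = 0
  sq_add_self_succ : ∀ i, c (i + 1) ^ 2 + c (i + 1) + conwayProd c i = 0

namespace ConwayRelations

variable {R : Type*} [CommRing R] [CharP R 2] {c : ℕ → R} (hc : ConwayRelations c)
include hc

theorem sq_zero : c 0 ^ 2 = c 0 + 1 := by
  linear_combination hc.sq_add_self_zero - (c 0 + 1) * CharTwo.two_eq_zero (R := R)

theorem sq_succ (i : ℕ) : c (i + 1) ^ 2 = c (i + 1) + conwayProd c i := by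
  linear_combination
    hc.sq_add_self_succ i - (c (i + 1) + conwayProd c i) * CharTwo.two_eq_zero (R := R)

theorem pow_two_pow_succ_of_trace_eq_one {i : ℕ}
    (htr : ∑ t ∈ range (2 ^ (i + 1)), conwayProd c i ^ 2 ^ t = 1) :
    c (i + 1) ^ 2 ^ 2 ^ (i + 1) = c (i + 1) + 1 := by
  rw [pow_two_pow_eq_add_sum_of_sq_eq_add (hc.sq_succ i), htr]

theorem conwayProd_pow_and_trace (i : ℕ) :
    conwayProd c i ^ 2 ^ 2 ^ (i + 1) = conwayProd c i ∧
      ∑ t ∈ range (2 ^ (i + 1)), conwayProd c i ^ 2 ^ t = 1 := by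
  induction i with
  | zero =>
    have h : conwayProd c 0 ^ 2 ^ 1 = conwayProd c 0 + 1 := by
      simpa [conwayProd] using hc.sq_zero
    exact ⟨pow_two_pow_add_self_eq_self h (one_pow _),
      by simpa using sum_range_add_self_pow_two_pow h⟩
  | succ i ih =>
    obtain ⟨hpow, htr⟩ := ih
    have h : conwayProd c (i + 1) ^ 2 ^ 2 ^ (i + 1) = conwayProd c (i + 1) + conwayProd c i := by
      rw [conwayProd, prod_range_succ, mul_pow, ← conwayProd, hpow,
        hc.pow_two_pow_succ_of_trace_eq_one htr]
      ring
    rw [show 2 ^ (i + 1 + 1) = 2 ^ (i + 1) + 2 ^ (i + 1) by ring]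
    exact ⟨pow_two_pow_add_self_eq_self h hpow, (sum_range_add_self_pow_two_pow h).trans htr⟩

theorem pow_two_pow_succ_eq_add_one (i : ℕ) : c (i + 1) ^ 2 ^ 2 ^ (i + 1) = c (i + 1) + 1 :=
  hc.pow_two_pow_succ_of_trace_eq_one (hc.conwayProd_pow_and_trace i).2

theorem pow_fermatNumber_succ (i : ℕ) : c (i + 1) ^ Nat.fermatNumber (i + 1) = conwayProd c i := by
  rw [Nat.fermatNumber, pow_succ, hc.pow_two_pow_succ_eq_add_one]
  linear_combination hc.sq_succ i + c (i + 1) * CharTwo.two_eq_zero (R := R)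

theorem conwayProd_succ_pow_fermatNumber (i : ℕ) :
    conwayProd c (i + 1) ^ Nat.fermatNumber (i + 1) = conwayProd c i ^ 3 := by
  rw [conwayProd_succ, mul_pow, hc.pow_fermatNumber_succ, Nat.fermatNumber, pow_succ,
    (hc.conwayProd_pow_and_trace i).1]
  ring

variable [IsDomain R]

theorem conwayProd_ne_zero (i : ℕ) : conwayProd c i ≠ 0 := by
  intro h
  simpa [h] using (hc.conwayProd_pow_and_trace i).2

theorem conwayProd_pow_three_mul_cubeExponent (i : ℕ) :
    conwayProd c i ^ (3 * cubeExponent i) = 1 := by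
  refine mul_left_cancel₀ (hc.conwayProd_ne_zero i) ?_
  rw [← pow_succ', three_mul_cubeExponent_add_one, (hc.conwayProd_pow_and_trace i).1, mul_one]

theorem conwayProd_succ_pow_cubeExponent (i : ℕ) :
    conwayProd c (i + 1) ^ cubeExponent (i + 1) = 1 := by
  rw [cubeExponent_succ, mul_comm, pow_mul, hc.conwayProd_succ_pow_fermatNumber, ← pow_mul,
    hc.conwayProd_pow_three_mul_cubeExponent]

theorem pow_cubeExponent (i : ℕ) : c (i + 2) ^ cubeExponent (i + 2) = 1 := by
  rw [cubeExponent_succ, mul_comm, pow_mul, hc.pow_fermatNumber_succ,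
    hc.conwayProd_succ_pow_cubeExponent]

theorem orderOf_zero : orderOf (c 0) = 3 := by
  refine orderOf_eq_prime ?_ fun h => ?_
  · linear_combination (c 0 + 1) * hc.sq_zero + c 0 * CharTwo.two_eq_zero (R := R)
  · simpa [h] using hc.sq_zero

end ConwayRelations

theorem conway_orderOf_mul_c0_general (c : ℕ → AlgebraicClosure (ZMod 2))
    (hc0 : c 0 ^ 2 + c 0 + 1 = 0)
    (hrec : ∀ i : ℕ, c (i + 1) ^ 2 + c (i + 1) + ∏ j ∈ Finset.range (i + 1), c j = 0)
    (i : ℕ) (hi : 2 ≤ i) :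
    orderOf (c i * c 0) = fermatN 0 * orderOf (c i) ∧
    orderOf (c i * c 0) = 3 * orderOf (c i) ∧
    orderOf ((∏ j ∈ Finset.range (i + 1), c j) * c 0)
      = fermatN 0 * orderOf (∏ j ∈ Finset.range (i + 1), c j) ∧
    orderOf ((∏ j ∈ Finset.range (i + 1), c j) * c 0)
      = 3 * orderOf (∏ j ∈ Finset.range (i + 1), c j) := by
  have hc : ConwayRelations c := ⟨hc0, hrec⟩
  obtain ⟨k, rfl⟩ : ∃ k, i = k + 2 := ⟨i - 2, by omega⟩
  have hcop : (cubeExponent (k + 2)).Coprime (orderOf (c 0)) := by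
    rw [hc.orderOf_zero]
    exact (coprime_three_cubeExponent _).symm
  have hc_i := orderOf_mul_eq_mul_orderOf_of_pow_eq_one (hc.pow_cubeExponent k) hcop
  have ha_i :=
    orderOf_mul_eq_mul_orderOf_of_pow_eq_one (hc.conwayProd_succ_pow_cubeExponent (k + 1)) hcop
  rw [hc.orderOf_zero, mul_comm _ 3] at hc_i ha_i
  exact ⟨hc_i, hc_i, ha_i, ha_i⟩

/-- For every `i ≥ 2`, `O(c_i · c_0) = N_0 · O(c_i) = 3 · O(c_i)` and
`O(a_i · a_0) = N_0 · O(a_i) = 3 · O(a_i)`, where `a_k = ∏_{j=0}^{k} c_j`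
(so `a_0 = c_0`) and `N_0 = 3`. -/
theorem conway_orderOf_mul_c0 (c : ℕ → AlgebraicClosure (ZMod 2))
    (hc0 : c 0 ^ 2 + c 0 + 1 = 0)
    (hrec : ∀ i : ℕ, c (i + 1) ^ 2 + c (i + 1) + ∏ j ∈ Finset.range (i + 1), c j = 0)
    (hnot : ∀ i : ℕ, c (i + 1) ∉ conwayL c (i + 1))
    (i : ℕ) (hi : 2 ≤ i) :
    orderOf (c i * c 0) = fermatN 0 * orderOf (c i) ∧
    orderOf (c i * c 0) = 3 * orderOf (c i) ∧
    orderOf ((∏ j ∈ Finset.range (i + 1), c j) * c 0)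
      = fermatN 0 * orderOf (∏ j ∈ Finset.range (i + 1), c j) ∧
    orderOf ((∏ j ∈ Finset.range (i + 1), c j) * c 0)
      = 3 * orderOf (∏ j ∈ Finset.range (i + 1), c j) :=
  conway_orderOf_mul_c0_general c hc0 hrec i hi
end
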